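/- arXiv:1007.1309 — 5 statements merged into one kernel-verified Lean document; each statement's English description precedes it below -/
import Mathlib

section
/- For any real constants λ₁, λ₂, the function x(t) = ((1 + 2t λ₁)(λ₂ - 1)) / (t(λ₂ - 1) + t² λ₁(λ₂ - 1) + (λ₁ - 1) λ₂) is a solution of x'' + 3 x x' + x^3 = 0 at every point t where the denominator is nonzero. -/
/-!
Writing `x = u' / u` turns `x'' + 3 x x' + x³` into `u''' / u`, so the logarithmic derivative of
any quadratic is a solution wherever the quadratic does not vanish. The given family is the
logarithmic derivative of its own denominator.
-/

open Filter Topology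

section LogDeriv

variable {𝕜 : Type*} [NontriviallyNormedField 𝕜] {u u' u'' : 𝕜 → 𝕜} {a t : 𝕜}

theorem eventually_hasDerivAt_div
    (hu : ∀ᶠ s in 𝓝 t, HasDerivAt u (u' s) s) (hu' : ∀ᶠ s in 𝓝 t, HasDerivAt u' (u'' s) s)
    (ht : u t ≠ 0) :
    ∀ᶠ s in 𝓝 t, HasDerivAt (fun s => u' s / u s)
      ((u'' s * u s - u' s * u' s) / u s ^ 2) s := by
  have hne : ∀ᶠ s in 𝓝 t, u s ≠ 0 := hu.self_of_nhds.continuousAt.eventually_ne ht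
  filter_upwards [hu, hu', hne] with s hus hu's hs
  exact hu's.div hus hs

theorem deriv_deriv_div_add_three_mul_add_cube
    (hu : ∀ᶠ s in 𝓝 t, HasDerivAt u (u' s) s) (hu' : ∀ᶠ s in 𝓝 t, HasDerivAt u' (u'' s) s)
    (hu'' : HasDerivAt u'' a t) (ht : u t ≠ 0) :
    deriv (deriv fun s => u' s / u s) t + 3 * (u' t / u t) * deriv (fun s => u' s / u s) t
      + (u' t / u t) ^ 3 = a / u t := by
  have hx := eventually_hasDerivAt_div hu hu' ht
  have hx' : deriv (fun s => u' s / u s) =ᶠ[𝓝 t]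
      fun s => (u'' s * u s - u' s * u' s) / u s ^ 2 :=
    hx.mono fun s hs => hs.deriv
  have hu₀ := hu.self_of_nhds
  have hu'₀ := hu'.self_of_nhds
  have hx'' := ((hu''.fun_mul hu₀).fun_sub (hu'₀.fun_mul hu'₀)).fun_div (hu₀.fun_pow 2)
    (pow_ne_zero 2 ht)
  rw [hx'.deriv_eq, hx''.deriv, hx.self_of_nhds.deriv]
  field_simp
  ring

end LogDeriv

theorem stmt_3 (l1 l2 : ℝ) :
    ∀ t : ℝ,
      t * (l2 - 1) + t ^ 2 * l1 * (l2 - 1) + (l1 - 1) * l2 ≠ 0 →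
      deriv (deriv (fun s : ℝ =>
          ((1 + 2 * s * l1) * (l2 - 1)) /
            (s * (l2 - 1) + s ^ 2 * l1 * (l2 - 1) + (l1 - 1) * l2))) t
        + 3 * (((1 + 2 * t * l1) * (l2 - 1)) /
            (t * (l2 - 1) + t ^ 2 * l1 * (l2 - 1) + (l1 - 1) * l2)) *
          deriv (fun s : ℝ =>
            ((1 + 2 * s * l1) * (l2 - 1)) /
              (s * (l2 - 1) + s ^ 2 * l1 * (l2 - 1) + (l1 - 1) * l2)) t
        + (((1 + 2 * t * l1) * (l2 - 1)) /
            (t * (l2 - 1) + t ^ 2 * l1 * (l2 - 1) + (l1 - 1) * l2)) ^ 3 = 0 := by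
  intro t ht
  have hu (s : ℝ) : HasDerivAt (fun s => s * (l2 - 1) + s ^ 2 * l1 * (l2 - 1) + (l1 - 1) * l2)
      ((1 + 2 * s * l1) * (l2 - 1)) s :=
    ((((hasDerivAt_id' s).mul_const (l2 - 1)).add
      (((hasDerivAt_pow 2 s).mul_const l1).mul_const (l2 - 1))).add_const _).congr_deriv (by ring)
  have hu' (s : ℝ) : HasDerivAt (fun s => (1 + 2 * s * l1) * (l2 - 1)) (2 * l1 * (l2 - 1)) s :=
    (((((hasDerivAt_id' s).const_mul 2).mul_const l1).const_add 1).mul_const (l2 - 1)).congr_deriv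
      (by ring)
  have h := deriv_deriv_div_add_three_mul_add_cube (Eventually.of_forall hu)
    (Eventually.of_forall hu') (hasDerivAt_const t (2 * l1 * (l2 - 1))) ht
  rwa [zero_div] at h
end

section
/- Let X₄ = x ∂/∂x − 2x² ∂/∂v and X₅ = (v + 2x²) ∂/∂x − x(v + 3x²) ∂/∂v on ℝ². Then [X₄, X₅] = −X₁, where X₁ = v ∂/∂x − (3xv + x³) ∂/∂v. -/
noncomputable def lieBracketVF (X Y : ℝ × ℝ → ℝ × ℝ) : ℝ × ℝ → ℝ × ℝ :=
  fun p => fderiv ℝ Y p (X p) - fderiv ℝ X p (Y p)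

open ContinuousLinearMap

theorem lieBracketVF_apply_of_hasFDerivAt {X Y : ℝ × ℝ → ℝ × ℝ} {X' Y' : ℝ × ℝ →L[ℝ] ℝ × ℝ}
    {p : ℝ × ℝ} (hX : HasFDerivAt X X' p) (hY : HasFDerivAt Y Y' p) :
    lieBracketVF X Y p = Y' (X p) - X' (Y p) := by
  rw [lieBracketVF, hX.fderiv, hY.fderiv]

theorem hasFDerivAt_fst_sq (p : ℝ × ℝ) :
    HasFDerivAt (fun q : ℝ × ℝ => q.1 ^ 2) ((2 * p.1) • fst ℝ ℝ ℝ) p :=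
  ((hasFDerivAt_fst (𝕜 := ℝ)).pow 2).congr_fderiv (by ext <;> simp)

theorem hasFDerivAt_X₄ (p : ℝ × ℝ) :
    HasFDerivAt (fun q : ℝ × ℝ => (q.1, -2 * q.1 ^ 2))
      ((fst ℝ ℝ ℝ).prod ((-4 * p.1) • fst ℝ ℝ ℝ)) p :=
  (hasFDerivAt_fst.prodMk ((hasFDerivAt_fst_sq p).const_mul (-2))).congr_fderiv
    (by ext <;> simp; ring)

theorem hasFDerivAt_X₅ (p : ℝ × ℝ) :
    HasFDerivAt (fun q : ℝ × ℝ => (q.2 + 2 * q.1 ^ 2, -q.1 * (q.2 + 3 * q.1 ^ 2)))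
      ((snd ℝ ℝ ℝ + (4 * p.1) • fst ℝ ℝ ℝ).prod
        (-(p.1 • snd ℝ ℝ ℝ) - (p.2 + 9 * p.1 ^ 2) • fst ℝ ℝ ℝ)) p :=
  ((hasFDerivAt_snd.add ((hasFDerivAt_fst_sq p).const_mul 2)).prodMk
      (hasFDerivAt_fst.neg.mul (hasFDerivAt_snd.add ((hasFDerivAt_fst_sq p).const_mul 3))))
    |>.congr_fderiv (by ext <;> simp <;> ring)

theorem stmt_7 :
    lieBracketVF (fun p : ℝ × ℝ => (p.1, -2 * p.1 ^ 2))
        (fun p : ℝ × ℝ => (p.2 + 2 * p.1 ^ 2, -p.1 * (p.2 + 3 * p.1 ^ 2)))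
      = fun p : ℝ × ℝ => -(p.2, -(3 * p.1 * p.2 + p.1 ^ 3)) := by
  funext p
  rw [lieBracketVF_apply_of_hasFDerivAt (hasFDerivAt_X₄ p) (hasFDerivAt_X₅ p)]
  simp only [prod_apply, add_apply, sub_apply, neg_apply, smul_apply, coe_fst', coe_snd',
    smul_eq_mul, Prod.mk_sub_mk, Prod.neg_mk, Prod.mk.injEq]
  constructor <;> ring
end

section
/- Let x₀, x₁, x₂, x₃, x₄ be any five solutions of the ODE x'' + 3 x x' + x³ = 0 on an interval I, and for indices a, b, c let F_{abc}(t) = x_a'(x_c − x_b) + x_b'(x_a − x_c) + x_c'(x_b − x_a) + (x_a − x_b)(x_b − x_c)(x_c − x_a). Then the function Λ(t) = (F₄₃₁(t)·F₂₁₀(t))/(F₄₂₁(t)·F₃₁₀(t)) is constant on any interval where the denominator does not vanish. -/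
theorem stmt_14
    (I : Set ℝ) (hI : IsOpen I) (hconn : IsPreconnected I)
    (x v : Fin 5 → ℝ → ℝ)
    (hx : ∀ a, ∀ t ∈ I, HasDerivAt (x a) (v a t) t)
    (hv : ∀ a, ∀ t ∈ I,
      HasDerivAt (v a) (-(3 * x a t * v a t + x a t ^ 3)) t)
    (F : Fin 5 → Fin 5 → Fin 5 → ℝ → ℝ)
    (hF : ∀ a b c, ∀ t : ℝ,
      F a b c t = v a t * (x c t - x b t) + v b t * (x a t - x c t)
        + v c t * (x b t - x a t)
        + (x a t - x b t) * (x b t - x c t) * (x c t - x a t))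
    (hden : ∀ t ∈ I, F 4 2 1 t * F 3 1 0 t ≠ 0) :
    ∀ s ∈ I, ∀ t ∈ I,
      F 4 3 1 s * F 2 1 0 s / (F 4 2 1 s * F 3 1 0 s)
        = F 4 3 1 t * F 2 1 0 t / (F 4 2 1 t * F 3 1 0 t) := by
  -- Key derivative lemma for each F a b c
  have hFd : ∀ a b c : Fin 5, ∀ t ∈ I,
      HasDerivAt (F a b c) (-(x a t + x b t + x c t) * F a b c t) t := by
    intro a b c t ht
    have hFeq : F a b c = fun s => v a s * (x c s - x b s) + v b s * (x a s - x c s)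
        + v c s * (x b s - x a s)
        + (x a s - x b s) * (x b s - x c s) * (x c s - x a s) :=
      funext (hF a b c)
    rw [hFeq]
    have H := (((hv a t ht).mul ((hx c t ht).sub (hx b t ht))).add
        ((hv b t ht).mul ((hx a t ht).sub (hx c t ht)))).add
        ((hv c t ht).mul ((hx b t ht).sub (hx a t ht)))
    have H2 := H.add ((((hx a t ht).sub (hx b t ht)).mul
        ((hx b t ht).sub (hx c t ht))).mul ((hx c t ht).sub (hx a t ht)))
    refine H2.congr_deriv (Eq.symm ?_)
    simp only [Pi.sub_apply, Pi.mul_apply]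
    ring
  -- derivative of the numerator and denominator
  set N : ℝ → ℝ := fun t => F 4 3 1 t * F 2 1 0 t with hN
  set D : ℝ → ℝ := fun t => F 4 2 1 t * F 3 1 0 t with hD
  have hc : ∀ t : ℝ, True := fun _ => trivial
  have hNd : ∀ t ∈ I, HasDerivAt N
      (-(x 0 t + x 1 t + x 1 t + x 2 t + x 3 t + x 4 t) * N t) t := by
    intro t ht
    have := (hFd 4 3 1 t ht).mul (hFd 2 1 0 t ht)
    refine this.congr_deriv (Eq.symm ?_)
    simp only [hN]
    ring
  have hDd : ∀ t ∈ I, HasDerivAt D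
      (-(x 0 t + x 1 t + x 1 t + x 2 t + x 3 t + x 4 t) * D t) t := by
    intro t ht
    have := (hFd 4 2 1 t ht).mul (hFd 3 1 0 t ht)
    refine this.congr_deriv (Eq.symm ?_)
    simp only [hD]
    ring
  have hQd : ∀ t ∈ I, HasDerivAt (fun s => N s / D s) 0 t := by
    intro t ht
    have hdt : D t ≠ 0 := hden t ht
    have := (hNd t ht).div (hDd t ht) hdt
    refine this.congr_deriv (Eq.symm ?_)
    field_simp
    ring
  -- constancy on the preconnected set
  have hord : I.OrdConnected := hconn.ordConnected
  have key : ∀ a ∈ I, ∀ b ∈ I, a ≤ b → N a / D a = N b / D b := by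
    intro a ha b hb hab
    have hsub : Set.Icc a b ⊆ I := hord.out ha hb
    have hcont : ContinuousOn (fun s => N s / D s) (Set.Icc a b) := fun s hs =>
      ((hQd s (hsub hs)).continuousAt).continuousWithinAt
    have hderiv : ∀ s ∈ Set.Ico a b,
        HasDerivWithinAt (fun s => N s / D s) 0 (Set.Ici s) s := fun s hs =>
      (hQd s (hsub ⟨hs.1, le_of_lt hs.2⟩)).hasDerivWithinAt
    have := constant_of_has_deriv_right_zero hcont hderiv b ⟨hab, le_rfl⟩
    exact this.symm
  intro s hs t ht
  rcases le_total s t with h | h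
  · exact key s hs t ht h
  · exact (key t ht s hs h).symm
end

section
/- With F_{abc}(t) defined from five solutions x₀,…,x₄ of x'' + 3 x x' + x³ = 0 as F_{abc} = x_a'(x_c − x_b) + x_b'(x_a − x_c) + x_c'(x_b − x_a) + (x_a − x_b)(x_b − x_c)(x_c − x_a), the function Λ₂(t) = (F₄₃₁(t)·F₄₂₀(t))/(F₄₂₁(t)·F₄₃₀(t)) is constant on any interval where the denominator never vanishes. -/
/-!
Along solutions of `x'' + 3 x x' + x³ = 0`, each `F_{abc}` solves the linear equation
`F' = -(x_a + x_b + x_c) F`. Numerator and denominator of `Λ₂` are products of two such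
factors whose index multisets coincide (`{4,4,3,2,1,0}`), so they share the same logarithmic
derivative and their quotient has derivative zero on the connected open set `I`.
-/

/-- The paper's `F_{abc}`, for positions `x` and velocities `v`. -/
def tripleForm {ι : Type*} (x v : ι → ℝ → ℝ) (a b c : ι) (t : ℝ) : ℝ :=
  v a t * (x c t - x b t) + v b t * (x a t - x c t) + v c t * (x b t - x a t)
    + (x a t - x b t) * (x b t - x c t) * (x c t - x a t)

theorem hasDerivAt_tripleForm {ι : Type*} {x v : ι → ℝ → ℝ} {t : ℝ}
    (hx : ∀ i, HasDerivAt (x i) (v i t) t)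
    (hv : ∀ i, HasDerivAt (v i) (-(3 * x i t * v i t + x i t ^ 3)) t) (a b c : ι) :
    HasDerivAt (tripleForm x v a b c) (-(x a t + x b t + x c t) * tripleForm x v a b c t) t := by
  have h := ((((hv a).mul ((hx c).sub (hx b))).add ((hv b).mul ((hx a).sub (hx c)))).add
      ((hv c).mul ((hx b).sub (hx a)))).add
    ((((hx a).sub (hx b)).mul ((hx b).sub (hx c))).mul ((hx c).sub (hx a)))
  refine h.congr_deriv ?_
  simp only [tripleForm, Pi.sub_apply, Pi.mul_apply]
  ring

theorem HasDerivAt.mul_of_eq_mul {f g : ℝ → ℝ} {p q t : ℝ}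
    (hf : HasDerivAt f (p * f t) t) (hg : HasDerivAt g (q * g t) t) :
    HasDerivAt (fun u ↦ f u * g u) ((p + q) * (f t * g t)) t := by
  refine (hf.mul hg).congr_deriv ?_
  ring

theorem HasDerivAt.div_eq_zero_of_eq_mul {f g : ℝ → ℝ} {p q t : ℝ}
    (hf : HasDerivAt f (p * f t) t) (hg : HasDerivAt g (q * g t) t) (hpq : p = q)
    (hgt : g t ≠ 0) : HasDerivAt (fun u ↦ f u / g u) 0 t := by
  refine (hf.div hg hgt).congr_deriv ?_
  rw [hpq]
  ring

theorem stmt_15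
    (I : Set ℝ) (hI : IsOpen I) (hconn : IsPreconnected I)
    (x v : Fin 5 → ℝ → ℝ)
    (hx : ∀ a, ∀ t ∈ I, HasDerivAt (x a) (v a t) t)
    (hv : ∀ a, ∀ t ∈ I,
      HasDerivAt (v a) (-(3 * x a t * v a t + x a t ^ 3)) t)
    (F : Fin 5 → Fin 5 → Fin 5 → ℝ → ℝ)
    (hF : ∀ a b c, ∀ t : ℝ,
      F a b c t = v a t * (x c t - x b t) + v b t * (x a t - x c t)
        + v c t * (x b t - x a t)
        + (x a t - x b t) * (x b t - x c t) * (x c t - x a t))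
    (hden : ∀ t ∈ I, F 4 2 1 t * F 4 3 0 t ≠ 0) :
    ∀ s ∈ I, ∀ t ∈ I,
      F 4 3 1 s * F 4 2 0 s / (F 4 2 1 s * F 4 3 0 s)
        = F 4 3 1 t * F 4 2 0 t / (F 4 2 1 t * F 4 3 0 t) := by
  have hF' : F = tripleForm x v := by
    ext a b c t
    exact hF a b c t
  subst hF'
  have hderiv : ∀ t ∈ I, HasDerivAt (fun u ↦ tripleForm x v 4 3 1 u * tripleForm x v 4 2 0 u /
      (tripleForm x v 4 2 1 u * tripleForm x v 4 3 0 u)) 0 t := by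
    intro t ht
    have hT := hasDerivAt_tripleForm (fun i ↦ hx i t ht) (fun i ↦ hv i t ht)
    exact ((hT 4 3 1).mul_of_eq_mul (hT 4 2 0)).div_eq_zero_of_eq_mul
      ((hT 4 2 1).mul_of_eq_mul (hT 4 3 0)) (by ring) (hden t ht)
  intro s hs t ht
  exact hI.is_const_of_deriv_eq_zero hconn
    (fun u hu ↦ (hderiv u hu).differentiableAt.differentiableWithinAt)
    (fun u hu ↦ (hderiv u hu).deriv) hs ht
end

section
/- Suppose a₃(t) > 0 is differentiable, and set b₀(t) = a₂(t)/√(a₃(t)) − ȧ₃(t)/(2a₃(t)) and b₁(t) = 3√(a₃(t)). If x(t) solves the second-order Riccati equation ẍ + (b₀(t) + b₁(t) x) ẋ + a₀(t) + a₁(t) x + a₂(t) x² + a₃(t) x³ = 0, then the pair (x'(t), v'(t)) = (x(t), ẋ(t)/√(a₃(t))) solves the system ẋ' = √(a₃(t)) v', v̇' = −a₀(t)/√(a₃(t)) − √(a₃(t))(3 v' x' + x'³) − (a₁(t)/√(a₃(t))) x' − (a₂(t)/√(a₃(t)))(v' + x'²). -/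
/-!
Differentiate `v = ẋ / √a₃` by the quotient rule and substitute `ẍ` from the equation: the
`-ȧ₃ / (2 a₃)` part of `b₀` is exactly what cancels the term coming from the derivative of
`1 / √a₃`, and what remains is the stated right-hand side after writing `a₃ = (√a₃)²`.
-/

open Real

theorem HasDerivAt.div_sqrt {f g : ℝ → ℝ} {f' g' t : ℝ} (hf : HasDerivAt f f' t)
    (hg : HasDerivAt g g' t) (hg_pos : 0 < g t) :
    HasDerivAt (fun s => f s / √(g s)) (f' / √(g t) - f t * g' / (2 * g t * √(g t))) t := by
  have hsqrt_pos : 0 < √(g t) := sqrt_pos.mpr hg_pos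
  refine (hf.div (hg.sqrt hg_pos.ne') hsqrt_pos.ne').congr_deriv ?_
  have hsq : g t = √(g t) ^ 2 := (sq_sqrt hg_pos.le).symm
  generalize √(g t) = s at hsqrt_pos hsq ⊢
  rw [hsq]
  field_simp

theorem stmt_19_general
    (a0 a1 a2 : ℝ → ℝ)
    (a3 a3d : ℝ → ℝ) (ha3pos : ∀ t, 0 < a3 t)
    (ha3 : ∀ t, HasDerivAt a3 (a3d t) t)
    (b0 b1 : ℝ → ℝ)
    (hb0 : ∀ t, b0 t = a2 t / Real.sqrt (a3 t) - a3d t / (2 * a3 t))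
    (hb1 : ∀ t, b1 t = 3 * Real.sqrt (a3 t))
    (x xd xdd : ℝ → ℝ)
    (hx : ∀ t, HasDerivAt x (xd t) t)
    (hxd : ∀ t, HasDerivAt xd (xdd t) t)
    (heq : ∀ t, xdd t + (b0 t + b1 t * x t) * xd t + a0 t + a1 t * x t
      + a2 t * x t ^ 2 + a3 t * x t ^ 3 = 0) :
    ∀ t, HasDerivAt x (Real.sqrt (a3 t) * (xd t / Real.sqrt (a3 t))) t ∧
      HasDerivAt (fun s => xd s / Real.sqrt (a3 s))
        (-(a0 t / Real.sqrt (a3 t))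
          - Real.sqrt (a3 t) * (3 * (xd t / Real.sqrt (a3 t)) * x t + x t ^ 3)
          - (a1 t / Real.sqrt (a3 t)) * x t
          - (a2 t / Real.sqrt (a3 t)) * (xd t / Real.sqrt (a3 t) + x t ^ 2)) t := by
  intro t
  have hsqrt_pos : 0 < √(a3 t) := sqrt_pos.mpr (ha3pos t)
  refine ⟨by rw [mul_div_cancel₀ _ hsqrt_pos.ne']; exact hx t, ?_⟩
  convert (hxd t).div_sqrt (ha3 t) (ha3pos t) using 1
  have hxdd : xdd t = -((a2 t / √(a3 t) - a3d t / (2 * a3 t) + 3 * √(a3 t) * x t) * xd t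
      + a0 t + a1 t * x t + a2 t * x t ^ 2 + a3 t * x t ^ 3) := by
    rw [← hb0, ← hb1]
    linarith [heq t]
  have hsq : a3 t = √(a3 t) ^ 2 := (sq_sqrt (ha3pos t).le).symm
  generalize √(a3 t) = s at hsqrt_pos hsq hxdd ⊢
  rw [hxdd, hsq]
  field_simp
  ring

theorem stmt_19
    (a0 a1 a2 : ℝ → ℝ)
    (ha0 : Continuous a0) (ha1 : Continuous a1) (ha2 : Continuous a2)
    (a3 a3d : ℝ → ℝ) (ha3pos : ∀ t, 0 < a3 t)
    (ha3 : ∀ t, HasDerivAt a3 (a3d t) t)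
    (b0 b1 : ℝ → ℝ)
    (hb0 : ∀ t, b0 t = a2 t / Real.sqrt (a3 t) - a3d t / (2 * a3 t))
    (hb1 : ∀ t, b1 t = 3 * Real.sqrt (a3 t))
    (x xd xdd : ℝ → ℝ)
    (hx : ∀ t, HasDerivAt x (xd t) t)
    (hxd : ∀ t, HasDerivAt xd (xdd t) t)
    (heq : ∀ t, xdd t + (b0 t + b1 t * x t) * xd t + a0 t + a1 t * x t
      + a2 t * x t ^ 2 + a3 t * x t ^ 3 = 0) :
    ∀ t, HasDerivAt x (Real.sqrt (a3 t) * (xd t / Real.sqrt (a3 t))) t ∧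
      HasDerivAt (fun s => xd s / Real.sqrt (a3 s))
        (-(a0 t / Real.sqrt (a3 t))
          - Real.sqrt (a3 t) * (3 * (xd t / Real.sqrt (a3 t)) * x t + x t ^ 3)
          - (a1 t / Real.sqrt (a3 t)) * x t
          - (a2 t / Real.sqrt (a3 t)) * (xd t / Real.sqrt (a3 t) + x t ^ 2)) t :=
  stmt_19_general a0 a1 a2 a3 a3d ha3pos ha3 b0 b1 hb0 hb1 x xd xdd hx hxd heq
end
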